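/- Every element of ⟨Cᵉ⟩, the inverse subsemigroup of G(E) generated by the set Cᵉ of cycles at a vertex e, is either 0 or of the form uv⁻¹ with u, v ∈ Cᵉ; in particular ⟨C₁ᵉ⟩ = ⟨Cᵉ⟩. -/

import Mathlib

/-- A directed graph: vertices, edges, source and range maps. -/
structure DGraph where
  V : Type
  E : Type
  s : E → V
  r : E → V

namespace DGraph

variable {Q : DGraph}

/-- `pOk Q a l` : the list of edges `l` forms a valid path starting at vertex `a`. -/
def pOk (Q : DGraph) : Q.V → List Q.E → Prop
  | _, [] => True
  | a, e :: l => Q.s e = a ∧ pOk Q (Q.r e) l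

/-- The end vertex of an edge-list starting at `a`. -/
def pRng (Q : DGraph) (a : Q.V) (l : List Q.E) : Q.V :=
  l.foldl (fun _ e => Q.r e) a

theorem pRng_append (a : Q.V) (l₁ l₂ : List Q.E) :
    pRng Q a (l₁ ++ l₂) = pRng Q (pRng Q a l₁) l₂ :=
  List.foldl_append

theorem pOk_append {a : Q.V} {l₁ l₂ : List Q.E} (h₁ : pOk Q a l₁)
    (h₂ : pOk Q (pRng Q a l₁) l₂) : pOk Q a (l₁ ++ l₂) := by
  induction l₁ generalizing a with
  | nil => simpa [pRng] using h₂
  | cons e l ih =>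
      obtain ⟨he, hl⟩ := h₁
      exact ⟨he, ih hl h₂⟩

theorem pOk_drop {a : Q.V} {l₁ l₂ : List Q.E} (h : pOk Q a (l₁ ++ l₂)) :
    pOk Q (pRng Q a l₁) l₂ := by
  induction l₁ generalizing a with
  | nil => simpa [pRng] using h
  | cons e l ih => exact ih h.2

/-- A (finite, directed) path in the graph `Q`: a start vertex together with a
compatible list of edges.  Paths of length `0` are vertices. -/
structure GPath (Q : DGraph) where
  start : Q.V
  edges : List Q.E
  ok : pOk Q start edges

/-- The source `s(p)` of a path. -/
def GPath.src (p : GPath Q) : Q.V := p.start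

/-- The range `r(p)` of a path. -/
def GPath.rng (p : GPath Q) : Q.V := pRng Q p.start p.edges

/-- The length `|p|` of a path. -/
def GPath.length (p : GPath Q) : ℕ := p.edges.length

/-- The trivial (length zero) path at a vertex `a`. -/
def GPath.triv (Q : DGraph) (a : Q.V) : GPath Q := ⟨a, [], trivial⟩

/-- Concatenation of composable paths. -/
def GPath.comp (p q : GPath Q) (h : p.rng = q.start) : GPath Q :=
  ⟨p.start, p.edges ++ q.edges, pOk_append p.ok (by
    have hq := q.ok
    rw [← h] at hq
    exact hq)⟩

theorem GPath.comp_rng (p q : GPath Q) (h : p.rng = q.start) :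
    (p.comp q h).rng = q.rng := by
  show pRng Q p.start (p.edges ++ q.edges) = q.rng
  rw [pRng_append, show pRng Q p.start p.edges = q.start from h]
  rfl

theorem exists_sub {p q : GPath Q} (h1 : q.start = p.start)
    (h2 : p.edges <+: q.edges) :
    ∃ w : GPath Q, w.start = p.rng ∧ w.rng = q.rng ∧ p.edges ++ w.edges = q.edges := by
  obtain ⟨t, ht⟩ := h2
  have hok : pOk Q p.start (p.edges ++ t) := by rw [ht, ← h1]; exact q.ok
  refine ⟨⟨p.rng, t, pOk_drop hok⟩, rfl, ?_, ht⟩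
  show pRng Q (pRng Q p.start p.edges) t = pRng Q q.start q.edges
  rw [← pRng_append, ht, ← h1]

/-- If the path `q` decomposes as `p·w`, this is the path `w`. -/
noncomputable def subPath (p q : GPath Q) (h1 : q.start = p.start)
    (h2 : p.edges <+: q.edges) : GPath Q :=
  (exists_sub h1 h2).choose

theorem subPath_spec (p q : GPath Q) (h1 : q.start = p.start)
    (h2 : p.edges <+: q.edges) :
    (subPath p q h1 h2).start = p.rng ∧ (subPath p q h1 h2).rng = q.rng ∧
      p.edges ++ (subPath p q h1 h2).edges = q.edges :=
  (exists_sub h1 h2).choose_spec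

/-- The graph inverse semigroup `G(E)` over the graph `Q`: the element `0`
together with the elements `u v⁻¹` where `u, v` are paths with `r(u) = r(v)`. -/
inductive GIS (Q : DGraph) : Type
  | zero : GIS Q
  | elm (u v : GPath Q) (h : u.rng = v.rng) : GIS Q

instance : Zero (GIS Q) := ⟨GIS.zero⟩

-- Multiplication in the graph inverse semigroup:
-- `u₁v₁⁻¹ · u₂v₂⁻¹ = u₁wv₂⁻¹` if `u₂ = v₁w`, `u₁(v₂w)⁻¹` if `v₁ = u₂w`, `0` otherwise.
open Classical in
noncomputable def GIS.mul : GIS Q → GIS Q → GIS Q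
  | .zero, _ => .zero
  | _, .zero => .zero
  | .elm u₁ v₁ h₁, .elm u₂ v₂ h₂ =>
    if hA : u₂.start = v₁.start ∧ v₁.edges <+: u₂.edges then
      GIS.elm (u₁.comp (subPath v₁ u₂ hA.1 hA.2)
          (by rw [(subPath_spec v₁ u₂ hA.1 hA.2).1, h₁]))
        v₂
        (by rw [GPath.comp_rng, (subPath_spec v₁ u₂ hA.1 hA.2).2.1, h₂])
    else if hB : v₁.start = u₂.start ∧ u₂.edges <+: v₁.edges then
      GIS.elm u₁
        (v₂.comp (subPath u₂ v₁ hB.1 hB.2)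
          (by rw [(subPath_spec u₂ v₁ hB.1 hB.2).1, h₂]))
        (by rw [GPath.comp_rng, (subPath_spec u₂ v₁ hB.1 hB.2).2.1, h₁])
    else .zero

noncomputable instance : Mul (GIS Q) := ⟨GIS.mul⟩

/-- The inversion map of the graph inverse semigroup: `(uv⁻¹)⁻¹ = vu⁻¹`, `0⁻¹ = 0`. -/
def GIS.inv : GIS Q → GIS Q
  | .zero => .zero
  | .elm u v h => .elm v u h.symm

/-- The canonical identification of a path `u` with the element `u · r(u)⁻¹` of `G(E)`. -/
def toGIS (p : GPath Q) : GIS Q := GIS.elm p (GPath.triv Q p.rng) rfl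

end DGraph


namespace DGraph
variable {Q : DGraph}
/-- The inverse subsemigroup of `G(E)` generated by a subset `S`. -/
inductive genInv (S : Set (GIS Q)) : GIS Q → Prop
  | base {x : GIS Q} : x ∈ S → genInv S x
  | mul {x y : GIS Q} : genInv S x → genInv S y → genInv S (x * y)
  | inv {x : GIS Q} : genInv S x → genInv S (GIS.inv x)

/-- `Cᵉ`: the set of cycles based at `e` (including the trivial path `e`). -/
def Cyc (Q : DGraph) (e : Q.V) : Set (GPath Q) := {u | u.start = e ∧ u.rng = e}

/-- `C₁ᵉ`: cycles based at `e` whose non-trivial proper prefixes do not end at `e`. -/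
def Cyc1 (Q : DGraph) (e : Q.V) : Set (GPath Q) :=
  {u | u ∈ Cyc Q e ∧ ∀ v : GPath Q, v.start = u.start → v.edges <+: u.edges →
      v.edges ≠ [] → v.edges ≠ u.edges → v.rng ≠ e}
end DGraph


namespace DGraph
variable {Q : DGraph}

theorem GPath.ext' {p q : GPath Q} (h1 : p.start = q.start)
    (h2 : p.edges = q.edges) : p = q := by
  cases p; cases q; simp_all

theorem GIS.elm_eq {u v u' v' : GPath Q} (h : u.rng = v.rng)
    (hu : u = u') (hv : v = v') :
    GIS.elm u v h = GIS.elm u' v' (hu ▸ hv ▸ h) := by subst hu hv; rfl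

theorem toGIS_comp (p q : GPath Q) (h : p.rng = q.start) :
    toGIS (p.comp q h) = toGIS p * toGIS q := by
  show _ = GIS.mul _ _
  rw [GIS.mul.eq_def]
  dsimp only [toGIS]
  have hA : q.start = (GPath.triv Q p.rng).start ∧
      (GPath.triv Q p.rng).edges <+: q.edges := ⟨h.symm, ⟨q.edges, rfl⟩⟩
  rw [dif_pos hA]
  obtain ⟨hs, hr, he⟩ := subPath_spec (GPath.triv Q p.rng) q hA.1 hA.2
  have he' : (subPath (GPath.triv Q p.rng) q hA.1 hA.2).edges = q.edges := by
    simpa [GPath.triv] using he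
  have hcomp : p.comp (subPath (GPath.triv Q p.rng) q hA.1 hA.2)
      (by rw [hs]; rfl) = p.comp q h :=
    GPath.ext' rfl (by show p.edges ++ _ = p.edges ++ q.edges; rw [he'])
  have hrng : (p.comp q h).rng = q.rng := GPath.comp_rng p q h
  exact GIS.elm_eq _ hcomp.symm (by rw [hrng])

theorem GIS.zero_mul' (y : GIS Q) : (0 : GIS Q) * y = 0 := by
  show GIS.mul _ _ = _; cases y <;> rfl

theorem GIS.mul_zero' (x : GIS Q) : x * (0 : GIS Q) = 0 := by
  show GIS.mul _ _ = _; cases x <;> rfl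

theorem triv_mem_Cyc1 (e : Q.V) : GPath.triv Q e ∈ Cyc1 Q e := by
  refine ⟨⟨rfl, rfl⟩, fun v hs hp hne _ _ => ?_⟩
  exact absurd (List.prefix_nil.mp hp) hne

theorem factor (e : Q.V) : ∀ n : ℕ, ∀ u : GPath Q, u.edges.length ≤ n →
    u ∈ Cyc Q e → genInv (toGIS '' Cyc1 Q e) (toGIS u) := by
  intro n
  induction n with
  | zero =>
      intro u hlen hu
      have : u = GPath.triv Q e := GPath.ext' hu.1
        (List.length_eq_zero_iff.mp (Nat.le_zero.mp hlen))
      rw [this]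
      exact genInv.base ⟨_, triv_mem_Cyc1 e, rfl⟩
  | succ n ih =>
      intro u hlen hu
      by_cases h1 : u ∈ Cyc1 Q e
      · exact genInv.base ⟨_, h1, rfl⟩
      · simp only [Cyc1, Set.mem_setOf_eq, not_and, not_forall] at h1
        obtain ⟨v, hs, hp, hne, hnu, hv⟩ := h1 hu
        push_neg at hv
        obtain ⟨ws, wr, we⟩ := subPath_spec v u hs.symm hp
        set w := subPath v u hs.symm hp with hw
        have hwne : w.edges ≠ [] := by
          intro h
          apply hnu
          rw [← we, h, List.append_nil]
        have hsum : v.edges.length + w.edges.length = u.edges.length := by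
          rw [← we]; simp
        have hl1 : v.edges.length ≠ 0 := by simpa using hne
        have hl2 : w.edges.length ≠ 0 := by simpa using hwne
        have hvlen : v.edges.length ≤ n := by omega
        have hwlen : w.edges.length ≤ n := by omega
        have hvc : v ∈ Cyc Q e := ⟨hs.trans hu.1, hv⟩
        have hwc : w ∈ Cyc Q e := ⟨by rw [ws, hv], by rw [wr, hu.2]⟩
        have hcomp : v.comp w ws.symm = u := GPath.ext' hs we
        rw [← hcomp, toGIS_comp]
        exact genInv.mul (ih v hvlen hvc) (ih w hwlen hwc)

end DGraph


open DGraph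

theorem stmt6 (Q : DGraph) (e : Q.V) :
    (∀ x : GIS Q, genInv (toGIS '' Cyc Q e) x →
      x = 0 ∨ ∃ (u v : GPath Q) (h : u.rng = v.rng),
        u ∈ Cyc Q e ∧ v ∈ Cyc Q e ∧ x = GIS.elm u v h) ∧
    {x : GIS Q | genInv (toGIS '' Cyc1 Q e) x} =
      {x : GIS Q | genInv (toGIS '' Cyc Q e) x} := by
  constructor
  · intro x hx
    induction hx with
    | base h =>
        obtain ⟨u, hu, rfl⟩ := h
        exact Or.inr ⟨u, GPath.triv Q u.rng, rfl, hu, ⟨hu.2, hu.2⟩, rfl⟩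
    | mul hx hy ihx ihy =>
        rcases ihx with rfl | ⟨u1, v1, h1, hu1, hv1, rfl⟩
        · exact Or.inl (GIS.zero_mul' _)
        rcases ihy with rfl | ⟨u2, v2, h2, hu2, hv2, rfl⟩
        · exact Or.inl (GIS.mul_zero' _)
        by_cases hA : u2.start = v1.start ∧ v1.edges <+: u2.edges
        · have key : GIS.elm u1 v1 h1 * GIS.elm u2 v2 h2 =
              GIS.elm (u1.comp (subPath v1 u2 hA.1 hA.2)
                  (by rw [(subPath_spec v1 u2 hA.1 hA.2).1, h1])) v2
                (by rw [GPath.comp_rng, (subPath_spec v1 u2 hA.1 hA.2).2.1, h2]) := by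
            show GIS.mul _ _ = _; rw [GIS.mul.eq_def]; dsimp only; rw [dif_pos hA]
          rw [key]
          refine Or.inr ⟨_, v2, _, ?_, hv2, rfl⟩
          refine ⟨hu1.1, ?_⟩
          rw [GPath.comp_rng, (subPath_spec v1 u2 hA.1 hA.2).2.1]
          exact hu2.2
        by_cases hB : v1.start = u2.start ∧ u2.edges <+: v1.edges
        · have key : GIS.elm u1 v1 h1 * GIS.elm u2 v2 h2 =
              GIS.elm u1 (v2.comp (subPath u2 v1 hB.1 hB.2)
                  (by rw [(subPath_spec u2 v1 hB.1 hB.2).1, h2]))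
                (by rw [GPath.comp_rng, (subPath_spec u2 v1 hB.1 hB.2).2.1, h1]) := by
            show GIS.mul _ _ = _; rw [GIS.mul.eq_def]; dsimp only
            rw [dif_neg hA, dif_pos hB]
          rw [key]
          refine Or.inr ⟨u1, _, _, hu1, ?_, rfl⟩
          refine ⟨hv2.1, ?_⟩
          rw [GPath.comp_rng, (subPath_spec u2 v1 hB.1 hB.2).2.1]
          exact hv1.2
        · have key : GIS.elm u1 v1 h1 * GIS.elm u2 v2 h2 = 0 := by
            show GIS.mul _ _ = _; rw [GIS.mul.eq_def]; dsimp only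
            rw [dif_neg hA, dif_neg hB]; rfl
          exact Or.inl key
    | inv hx ihx =>
        rcases ihx with rfl | ⟨u, v, h, hu, hv, rfl⟩
        · exact Or.inl rfl
        · exact Or.inr ⟨v, u, h.symm, hv, hu, rfl⟩
  · ext x
    simp only [Set.mem_setOf_eq]
    constructor
    · intro hx
      induction hx with
      | base h =>
          obtain ⟨u, hu, rfl⟩ := h
          exact genInv.base ⟨u, hu.1, rfl⟩
      | mul _ _ ih1 ih2 => exact genInv.mul ih1 ih2
      | inv _ ih => exact genInv.inv ih
    · intro hx
      induction hx with
      | base h =>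
          obtain ⟨u, hu, rfl⟩ := h
          exact factor e u.edges.length u le_rfl hu
      | mul _ _ ih1 ih2 => exact genInv.mul ih1 ih2
      | inv _ ih => exact genInv.inv ih
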